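/- arXiv:1007.4784 — 2 statements merged into one kernel-verified Lean document; each statement's English description precedes it below -/
import Mathlib

section
/- Let $\F$ be a collection of finite $S$-colored posets whose Hasse diagrams are rooted trees, closed under taking convex sub-posets. For connected $a, b \in \F$ define $\delta_a \rhd \delta_b = \sum_{t} n(a,b,t)\, \delta_t$, where $n(a,b,t)$ counts edges $e$ of $t$ with $P_e(t) \cong a$ and $R_e(t) \cong b$ as colored rooted trees. Then the span of $\{\delta_t : t \in \F \text{ connected}\}$ inside the free vector space on all colored rooted trees is stable under this operation, and $\rhd$ satisfies the left pre-Lie identity on it. -/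
/-!
Two cuts of `s` split it into three pieces. The coefficient of `s` in `(a ▷ b) ▷ c` counts the
ordered pairs of cut vertices `(v, w)`, with `v` a strict ancestor of `w`, whose pieces are `a`
below `w`, `b` between `v` and `w`, and `c` above `v`; the coefficient in `a ▷ (b ▷ c)` counts
the same pairs together with the pairs of incomparable cut vertices whose pieces are `a` below
`w`, `b` below `v` and `c` the rest. The difference is the number of incomparable pairs, which is
symmetric in `a` and `b`. Each pair determines its intermediate tree up to isomorphism, and the
closure of `F` under `P_e` and `R_e` puts that tree in `F`, so the sum over isomorphism classes
counts every pair exactly once.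
-/

/-- An `S`-colored rooted tree on the vertex set `Fin (n+1)`, given by a parent
function (with root `0`, and each non-root vertex's parent strictly smaller, which
makes the graph an acyclic rooted tree) together with a coloring of the vertices. -/
def PreTree (S : Type) (n : ℕ) : Type :=
  {pc : (Fin (n+1) → Fin (n+1)) × (Fin (n+1) → S) //
    pc.1 0 = 0 ∧ ∀ i, i ≠ 0 → pc.1 i < i}

instance (S : Type) (n : ℕ) [DecidableEq S] [Fintype S] : Fintype (PreTree S n) := by
  unfold PreTree; infer_instance

/-- `desc t v i` : `v` is an ancestor of `i` (or `i` itself), i.e. `i` lies in the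
subtree below `v`; equivalently, `i` is separated from the root when the edge above
`v` is cut. -/
def desc {S : Type} {n : ℕ} (t : PreTree S n) (v i : Fin (n+1)) : Prop :=
  ∃ k ∈ Finset.range (n+2), (t.1.1)^[k] i = v

instance {S : Type} {n : ℕ} (t : PreTree S n) (v i : Fin (n+1)) :
    Decidable (desc t v i) := by unfold desc; infer_instance

/-- `IsoBelow a t v` : the subtree `P_e(t)` of `t` hanging below the edge `e` above
`v` is isomorphic to `a` as an `S`-colored rooted tree. -/
def IsoBelow {S : Type} {p m : ℕ} (a : PreTree S p) (t : PreTree S m)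
    (v : Fin (m+1)) : Prop :=
  ∃ f : Fin (p+1) → Fin (m+1),
    Function.Injective f ∧ f 0 = v ∧
    (∀ j, desc t v j ↔ ∃ i, f i = j) ∧
    (∀ i, i ≠ 0 → t.1.1 (f i) = f (a.1.1 i)) ∧
    (∀ i, t.1.2 (f i) = a.1.2 i)

instance {S : Type} [DecidableEq S] {p m : ℕ} (a : PreTree S p) (t : PreTree S m)
    (v : Fin (m+1)) : Decidable (IsoBelow a t v) := by
  unfold IsoBelow; infer_instance

/-- `IsoAbove b t v` : the complementary component `R_e(t)` containing the root,
obtained by cutting the edge above `v`, is isomorphic to `b` as an `S`-colored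
rooted tree. -/
def IsoAbove {S : Type} {q m : ℕ} (b : PreTree S q) (t : PreTree S m)
    (v : Fin (m+1)) : Prop :=
  ∃ g : Fin (q+1) → Fin (m+1),
    Function.Injective g ∧ g 0 = 0 ∧
    (∀ j, ¬ desc t v j ↔ ∃ i, g i = j) ∧
    (∀ i, i ≠ 0 → t.1.1 (g i) = g (b.1.1 i)) ∧
    (∀ i, t.1.2 (g i) = b.1.2 i)

instance {S : Type} [DecidableEq S] {q m : ℕ} (b : PreTree S q) (t : PreTree S m)
    (v : Fin (m+1)) : Decidable (IsoAbove b t v) := by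
  unfold IsoAbove; infer_instance

/-- `graftCount a b t = n(a,b,t)`: the number of edges `e` of `t` (identified with
their lower endpoints, the non-root vertices) such that `P_e(t) ≅ a` and
`R_e(t) ≅ b` as `S`-colored rooted trees. -/
def graftCount {S : Type} [DecidableEq S] {p q m : ℕ}
    (a : PreTree S p) (b : PreTree S q) (t : PreTree S m) : ℕ :=
  (Finset.univ.filter fun v : Fin (m+1) =>
    v ≠ 0 ∧ IsoBelow a t v ∧ IsoAbove b t v).card

/-- Isomorphism of `S`-colored rooted trees on the same vertex set. -/
def treeRel {S : Type} {n : ℕ} (t t' : PreTree S n) : Prop :=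
  ∃ e : Fin (n+1) ≃ Fin (n+1),
    e 0 = 0 ∧ (∀ i, i ≠ 0 → t'.1.1 (e i) = e (t.1.1 i)) ∧
    (∀ i, t'.1.2 (e i) = t.1.2 i)

/-- Isomorphism classes of `S`-colored rooted trees with `n+1` vertices. -/
def TClass (S : Type) [Fintype S] [DecidableEq S] (n : ℕ) : Type :=
  Quot (@treeRel S n)

noncomputable instance (S : Type) [Fintype S] [DecidableEq S] (n : ℕ) :
    Fintype (TClass S n) :=
  letI : DecidableEq (TClass S n) := Classical.decEq _
  Fintype.ofSurjective (Quot.mk _) (fun q => Quot.exists_rep q)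

open scoped BigOperators

section Ancestry

variable {S : Type} {n : ℕ} (t : PreTree S n)

theorem parent_le (i : Fin (n+1)) : t.1.1 i ≤ i := by
  rcases eq_or_ne i 0 with rfl | hi
  · rw [t.2.1]
  · exact (t.2.2 i hi).le

theorem iterate_parent_zero (k : ℕ) : (t.1.1)^[k] 0 = 0 :=
  Function.iterate_fixed t.2.1 k

theorem iterate_parent_le (k : ℕ) (i : Fin (n+1)) : (t.1.1)^[k] i ≤ i := by
  induction k generalizing i with
  | zero => exact le_rfl
  | succ k ih => exact (ih (t.1.1 i)).trans (parent_le t i)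

theorem iterate_parent_eq_zero {k : ℕ} {i : Fin (n+1)} (hi : (i : ℕ) ≤ k) :
    (t.1.1)^[k] i = 0 := by
  induction k generalizing i with
  | zero => exact Fin.ext (by simpa using hi)
  | succ k ih =>
    rcases eq_or_ne i 0 with rfl | h0
    · exact iterate_parent_zero t _
    · rw [Function.iterate_succ_apply]
      exact ih (by have := t.2.2 i h0; omega)

variable {t}

theorem desc_iff_exists_iterate {v i : Fin (n+1)} :
    desc t v i ↔ ∃ k : ℕ, (t.1.1)^[k] i = v := by
  refine ⟨fun ⟨k, _, hk⟩ => ⟨k, hk⟩, fun ⟨k, hk⟩ => ?_⟩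
  rcases eq_or_ne v 0 with rfl | hv
  · exact ⟨n, by simp, iterate_parent_eq_zero t (by omega)⟩
  · -- every vertex reaches the root `0 ≠ v` within `n` steps
    refine ⟨k, Finset.mem_range.mpr (not_le.mp fun hk' => hv ?_), hk⟩
    rw [← hk, show k = (k - n) + n by omega, Function.iterate_add_apply,
      iterate_parent_eq_zero t (Nat.lt_succ_iff.mp i.isLt), iterate_parent_zero]

theorem desc_refl (v : Fin (n+1)) : desc t v v :=
  desc_iff_exists_iterate.mpr ⟨0, rfl⟩

theorem desc_zero_left (i : Fin (n+1)) : desc t 0 i :=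
  desc_iff_exists_iterate.mpr ⟨n, iterate_parent_eq_zero t (by omega)⟩

theorem desc_trans {u v i : Fin (n+1)} (h₁ : desc t u v) (h₂ : desc t v i) : desc t u i := by
  obtain ⟨k₁, hk₁⟩ := desc_iff_exists_iterate.mp h₁
  obtain ⟨k₂, hk₂⟩ := desc_iff_exists_iterate.mp h₂
  exact desc_iff_exists_iterate.mpr ⟨k₁ + k₂, by rw [Function.iterate_add_apply, hk₂, hk₁]⟩

theorem le_of_desc {v i : Fin (n+1)} (h : desc t v i) : v ≤ i := by
  obtain ⟨k, rfl⟩ := desc_iff_exists_iterate.mp h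
  exact iterate_parent_le t k i

theorem desc_antisymm {v w : Fin (n+1)} (h₁ : desc t v w) (h₂ : desc t w v) : v = w :=
  (le_of_desc h₁).antisymm (le_of_desc h₂)

theorem eq_zero_of_desc_zero {v : Fin (n+1)} (h : desc t v 0) : v = 0 :=
  desc_antisymm h (desc_zero_left v)

theorem desc_iff_eq_or_desc_parent {v i : Fin (n+1)} :
    desc t v i ↔ i = v ∨ (i ≠ 0 ∧ desc t v (t.1.1 i)) := by
  constructor
  · intro h
    obtain ⟨k, hk⟩ := desc_iff_exists_iterate.mp h
    rcases k with _ | k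
    · exact Or.inl hk
    rcases eq_or_ne i 0 with rfl | hi
    · exact Or.inl (eq_zero_of_desc_zero h).symm
    · exact Or.inr ⟨hi, desc_iff_exists_iterate.mpr ⟨k, hk⟩⟩
  · rintro (rfl | ⟨-, h⟩)
    · exact desc_refl i
    · obtain ⟨k, hk⟩ := desc_iff_exists_iterate.mp h
      exact desc_iff_exists_iterate.mpr ⟨k + 1, hk⟩

theorem desc_parent {v i : Fin (n+1)} (h : desc t v i) (hi : i ≠ v) : desc t v (t.1.1 i) :=
  ((desc_iff_eq_or_desc_parent.mp h).resolve_left hi).2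

theorem desc_of_desc_parent {v i : Fin (n+1)} (h : desc t v (t.1.1 i)) : desc t v i := by
  rcases eq_or_ne i 0 with rfl | hi
  · rw [t.2.1] at h; exact h
  · exact desc_iff_eq_or_desc_parent.mpr (Or.inr ⟨hi, h⟩)

theorem desc_total {v w j : Fin (n+1)} (hv : desc t v j) (hw : desc t w j) :
    desc t v w ∨ desc t w v := by
  obtain ⟨k₁, hk₁⟩ := desc_iff_exists_iterate.mp hv
  obtain ⟨k₂, hk₂⟩ := desc_iff_exists_iterate.mp hw
  rcases le_total k₁ k₂ with h | h
  · refine Or.inr (desc_iff_exists_iterate.mpr ⟨k₂ - k₁, ?_⟩)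
    rw [← hk₁, ← Function.iterate_add_apply, Nat.sub_add_cancel h, hk₂]
  · refine Or.inl (desc_iff_exists_iterate.mpr ⟨k₁ - k₂, ?_⟩)
    rw [← hk₂, ← Function.iterate_add_apply, Nat.sub_add_cancel h, hk₁]

end Ancestry

section Embedding

variable {S : Type}

structure IsTreeEmbedding {k m : ℕ} (t : PreTree S k) (s : PreTree S m)
    (f : Fin (k+1) → Fin (m+1)) : Prop where
  injective : Function.Injective f
  map_parent : ∀ i, i ≠ 0 → s.1.1 (f i) = f (t.1.1 i)
  map_color : ∀ i, s.1.2 (f i) = t.1.2 i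

namespace IsTreeEmbedding

variable {k m : ℕ} {t : PreTree S k} {s : PreTree S m} {f : Fin (k+1) → Fin (m+1)}

theorem desc_map (hf : IsTreeEmbedding t s f) {u i : Fin (k+1)} (h : desc t u i) :
    desc s (f u) (f i) := by
  induction i using WellFoundedLT.induction with
  | ind i ih =>
    rcases desc_iff_eq_or_desc_parent.mp h with rfl | ⟨hi, hp⟩
    · exact desc_refl _
    · have := ih _ (t.2.2 i hi) hp
      rw [← hf.map_parent i hi] at this
      exact desc_of_desc_parent this

theorem desc_map_zero (hf : IsTreeEmbedding t s f) (i : Fin (k+1)) : desc s (f 0) (f i) :=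
  hf.desc_map (desc_zero_left i)

theorem desc_map_iff (hf : IsTreeEmbedding t s f) {u i : Fin (k+1)} :
    desc s (f u) (f i) ↔ desc t u i := by
  refine ⟨fun h => ?_, hf.desc_map⟩
  induction i using WellFoundedLT.induction with
  | ind i ih =>
    rcases eq_or_ne i u with rfl | hiu
    · exact desc_refl i
    rcases eq_or_ne i 0 with rfl | hi
    · have := hf.injective (desc_antisymm h (hf.desc_map_zero u))
      rw [this]
      exact desc_refl 0
    · have hp := desc_parent h (hf.injective.ne hiu)
      rw [hf.map_parent i hi] at hp
      exact desc_of_desc_parent (ih _ (t.2.2 i hi) hp)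

theorem map_ne_zero (hf : IsTreeEmbedding t s f) {i : Fin (k+1)} (hi : i ≠ 0) : f i ≠ 0 := by
  intro h
  have := hf.desc_map_zero i
  rw [h] at this
  exact hi (hf.injective (h.trans (eq_zero_of_desc_zero this).symm))

theorem comp {l : ℕ} {r : PreTree S l} {g : Fin (m+1) → Fin (l+1)}
    (hg : IsTreeEmbedding s r g) (hf : IsTreeEmbedding t s f) : IsTreeEmbedding t r (g ∘ f) where
  injective := hg.injective.comp hf.injective
  map_parent i hi := by
    simp only [Function.comp_apply]
    rw [hg.map_parent _ (hf.map_ne_zero hi), hf.map_parent i hi]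
  map_color i := by simp only [Function.comp_apply, hg.map_color, hf.map_color]

end IsTreeEmbedding

theorem isTreeEmbedding_of_treeRel {n : ℕ} {t t' : PreTree S n} {e : Fin (n+1) ≃ Fin (n+1)}
    (hp : ∀ i, i ≠ 0 → t'.1.1 (e i) = e (t.1.1 i)) (hc : ∀ i, t'.1.2 (e i) = t.1.2 i) :
    IsTreeEmbedding t t' e :=
  ⟨e.injective, hp, hc⟩

theorem treeRel_refl {n : ℕ} (t : PreTree S n) : treeRel t t :=
  ⟨Equiv.refl _, rfl, fun _ _ => rfl, fun _ => rfl⟩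

theorem treeRel.symm {n : ℕ} {t t' : PreTree S n} (h : treeRel t t') : treeRel t' t := by
  obtain ⟨e, h0, hp, hc⟩ := h
  have h0' : e.symm 0 = 0 := e.symm_apply_eq.mpr h0.symm
  refine ⟨e.symm, h0', fun i hi => ?_, fun i => by rw [← hc, e.apply_symm_apply]⟩
  have hi' : e.symm i ≠ 0 := fun h => hi (by rw [← e.apply_symm_apply i, h, h0])
  apply e.injective
  rw [← hp _ hi']
  simp only [Equiv.apply_symm_apply]

theorem treeRel.trans {n : ℕ} {t t' t'' : PreTree S n} (h : treeRel t t') (h' : treeRel t' t'') :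
    treeRel t t'' := by
  obtain ⟨e, h0, hp, hc⟩ := h
  obtain ⟨e', h0', hp', hc'⟩ := h'
  have := (isTreeEmbedding_of_treeRel hp' hc').comp (isTreeEmbedding_of_treeRel hp hc)
  exact ⟨e.trans e', by simp [h0, h0'], this.map_parent, this.map_color⟩

theorem treeRel_out_mk {n : ℕ} (t : PreTree S n) : treeRel t (Quot.mk treeRel t).out :=
  (Equivalence.eqvGen_iff ⟨treeRel_refl, treeRel.symm, treeRel.trans⟩).mp
    (Quot.eqvGen_exact (Quot.out_eq _).symm)

end Embedding

section IsoOn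

variable {S : Type}

def IsoOn {l m : ℕ} (x : PreTree S l) (s : PreTree S m) (v : Fin (m+1))
    (E : Fin (m+1) → Prop) : Prop :=
  ∃ f, IsTreeEmbedding x s f ∧ f 0 = v ∧ ∀ j, E j ↔ ∃ i, f i = j

variable {l k m : ℕ} {x : PreTree S l} {s : PreTree S m} {v : Fin (m+1)}
  {E : Fin (m+1) → Prop}

theorem isoBelow_iff_isoOn {t : PreTree S m} :
    IsoBelow x t v ↔ IsoOn x t v (desc t v) :=
  ⟨fun ⟨f, h₁, h₂, h₃, h₄, h₅⟩ => ⟨f, ⟨h₁, h₄, h₅⟩, h₂, h₃⟩,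
    fun ⟨f, ⟨h₁, h₄, h₅⟩, h₂, h₃⟩ => ⟨f, h₁, h₂, h₃, h₄, h₅⟩⟩

theorem isoAbove_iff_isoOn {t : PreTree S m} :
    IsoAbove x t v ↔ IsoOn x t 0 (fun j => ¬ desc t v j) :=
  ⟨fun ⟨f, h₁, h₂, h₃, h₄, h₅⟩ => ⟨f, ⟨h₁, h₄, h₅⟩, h₂, h₃⟩,
    fun ⟨f, ⟨h₁, h₄, h₅⟩, h₂, h₃⟩ => ⟨f, h₁, h₂, h₃, h₄, h₅⟩⟩

theorem isoOn_congr {E' : Fin (m+1) → Prop} (hE : ∀ j, E j ↔ E' j) :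
    IsoOn x s v E ↔ IsoOn x s v E' := by
  simp only [IsoOn, hE]

theorem IsoOn.card_filter [DecidablePred E] (h : IsoOn x s v E) :
    (Finset.univ.filter E).card = l + 1 := by
  obtain ⟨f, hf, -, hE⟩ := h
  have : Finset.univ.filter E = Finset.univ.image f := by
    ext j
    simp [hE]
  rw [this, Finset.card_image_of_injective _ hf.injective, Finset.card_univ, Fintype.card_fin]

theorem IsoOn.of_treeRel {x' : PreTree S l} (h : IsoOn x s v E) (hrel : treeRel x x') :
    IsoOn x' s v E := by
  obtain ⟨e, h0, hp, hc⟩ := hrel.symm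
  obtain ⟨f, hf, hf0, hE⟩ := h
  refine ⟨f ∘ e, hf.comp (isTreeEmbedding_of_treeRel hp hc), by simp [h0, hf0], fun j => ?_⟩
  rw [hE]
  exact ⟨fun ⟨i, hi⟩ => ⟨e.symm i, by simp [hi]⟩, fun ⟨i, hi⟩ => ⟨e i, hi⟩⟩

theorem treeRel_of_isoOn {x' : PreTree S l} (h : IsoOn x s v E) (h' : IsoOn x' s v E) :
    treeRel x x' := by
  obtain ⟨f, hf, hf0, hE⟩ := h
  obtain ⟨f', hf', hf0', hE'⟩ := h'
  choose e he using fun i => (hE' (f i)).mp ((hE (f i)).mpr ⟨i, rfl⟩)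
  have he_inj : Function.Injective e := fun i i' h => hf.injective (by rw [← he, ← he, h])
  have he0 : e 0 = 0 := hf'.injective (by rw [he, hf0, hf0'])
  refine ⟨Equiv.ofBijective e (Finite.injective_iff_bijective.mp he_inj), he0,
    fun i hi => hf'.injective ?_, fun i => ?_⟩
  · have he_ne : e i ≠ 0 := fun h => hi (he_inj (h.trans he0.symm))
    simp only [Equiv.ofBijective_apply]
    rw [← hf'.map_parent _ he_ne, he, he, hf.map_parent i hi]
  · simp only [Equiv.ofBijective_apply]
    rw [← hf'.map_color, he, hf.map_color]

namespace IsTreeEmbedding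

variable {t : PreTree S k} {f : Fin (k+1) → Fin (m+1)}

theorem of_comp {g : Fin (l+1) → Fin (k+1)} (hf : IsTreeEmbedding t s f)
    (hfg : IsTreeEmbedding x s (f ∘ g)) : IsTreeEmbedding x t g := by
  have hg_inj : Function.Injective g := hfg.injective.of_comp
  -- `f ∘ g` sends the root of `x` to an ancestor of everything, so `g` does as well
  have hg_ne : ∀ i, i ≠ 0 → g i ≠ 0 := by
    intro i hi h
    have := hf.desc_map_iff.mp (hfg.desc_map_zero i)
    rw [h] at this
    exact hi (hg_inj (h.trans (eq_zero_of_desc_zero this).symm))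
  refine ⟨hg_inj, fun i hi => hf.injective ?_, fun i => ?_⟩
  · rw [← hf.map_parent _ (hg_ne i hi)]
    exact hfg.map_parent i hi
  · rw [← hf.map_color]
    exact hfg.map_color i

theorem isoOn_map_iff (hf : IsTreeEmbedding t s f) {r : Fin (k+1)} {D : Fin (k+1) → Prop} :
    IsoOn x t r D ↔ IsoOn x s (f r) (fun j => ∃ i, D i ∧ f i = j) := by
  constructor
  · rintro ⟨h, hh, rfl, hD⟩
    refine ⟨f ∘ h, hf.comp hh, rfl, fun j => ?_⟩
    simp only [hD, Function.comp_apply]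
    exact ⟨fun ⟨_, ⟨i, rfl⟩, hj⟩ => ⟨i, hj⟩, fun ⟨i, hj⟩ => ⟨_, ⟨i, rfl⟩, hj⟩⟩
  · rintro ⟨H, hH, hH0, hE⟩
    choose g hgD hg using fun i => (hE (H i)).mpr ⟨i, rfl⟩
    have hfg : f ∘ g = H := funext hg
    refine ⟨g, hf.of_comp (hfg ▸ hH), hf.injective (by rw [hg, hH0]), fun j => ⟨fun hj => ?_, ?_⟩⟩
    · obtain ⟨i, hi⟩ := (hE (f j)).mp ⟨j, hj, rfl⟩
      exact ⟨i, hf.injective (by rw [hg, hi])⟩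
    · rintro ⟨i, rfl⟩
      exact hgD i

theorem isoBelow_map_iff (hf : IsTreeEmbedding t s f) {u : Fin (k+1)} :
    IsoBelow x t u ↔ IsoOn x s (f u) (fun j => desc s (f u) j ∧ ∃ i, f i = j) := by
  rw [isoBelow_iff_isoOn, hf.isoOn_map_iff]
  refine isoOn_congr fun j => ⟨?_, ?_⟩
  · rintro ⟨i, hi, rfl⟩
    exact ⟨hf.desc_map hi, i, rfl⟩
  · rintro ⟨hd, i, rfl⟩
    exact ⟨i, hf.desc_map_iff.mp hd, rfl⟩

theorem isoAbove_map_iff (hf : IsTreeEmbedding t s f) {u : Fin (k+1)} :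
    IsoAbove x t u ↔ IsoOn x s (f 0) (fun j => ¬ desc s (f u) j ∧ ∃ i, f i = j) := by
  rw [isoAbove_iff_isoOn, hf.isoOn_map_iff]
  refine isoOn_congr fun j => ⟨?_, ?_⟩
  · rintro ⟨i, hi, rfl⟩
    exact ⟨fun hd => hi (hf.desc_map_iff.mp hd), i, rfl⟩
  · rintro ⟨hd, i, rfl⟩
    exact ⟨i, fun hd' => hd (hf.desc_map hd'), rfl⟩

end IsTreeEmbedding

open Classical in
theorem IsoOn.graftCount_eq [DecidableEq S] [DecidablePred E] {t : PreTree S k} {p q : ℕ}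
    (a : PreTree S p) (b : PreTree S q) (h : IsoOn t s v E) :
    graftCount a b t = (Finset.univ.filter fun w => E w ∧ w ≠ v ∧
      IsoOn a s w (fun j => desc s w j ∧ E j) ∧
      IsoOn b s v (fun j => ¬ desc s w j ∧ E j)).card := by
  obtain ⟨f, hf, rfl, hE⟩ := h
  unfold graftCount
  rw [← Finset.card_image_of_injective _ hf.injective]
  congr 1
  ext w
  simp only [Finset.mem_image, Finset.mem_filter, Finset.mem_univ, true_and]
  have hbelow : ∀ u, IsoBelow a t u ↔ IsoOn a s (f u) (fun j => desc s (f u) j ∧ E j) :=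
    fun u => hf.isoBelow_map_iff.trans (isoOn_congr fun j => by rw [hE])
  have habove : ∀ u, IsoAbove b t u ↔ IsoOn b s (f 0) (fun j => ¬ desc s (f u) j ∧ E j) :=
    fun u => hf.isoAbove_map_iff.trans (isoOn_congr fun j => by rw [hE])
  constructor
  · rintro ⟨u, ⟨hu, ha, hb⟩, rfl⟩
    exact ⟨(hE _).mpr ⟨u, rfl⟩, hf.injective.ne hu, (hbelow u).mp ha, (habove u).mp hb⟩
  · rintro ⟨hw, hne, ha, hb⟩
    obtain ⟨u, rfl⟩ := (hE w).mp hw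
    exact ⟨u, ⟨fun h => hne (h ▸ rfl), (hbelow u).mpr ha, (habove u).mpr hb⟩, rfl⟩

theorem exists_isoOn_of_card (s : PreTree S m) {C : Finset (Fin (m+1))} (hcard : C.card = k + 1)
    (hv : v ∈ C) (hmin : ∀ x ∈ C, v ≤ x) (hpar : ∀ x ∈ C, x ≠ v → s.1.1 x ∈ C) :
    ∃ T : PreTree S k, IsoOn T s v (· ∈ C) := by
  set o := C.orderIsoOfFin hcard
  have ho0 : (o 0 : Fin (m+1)) = v := by
    refine le_antisymm ?_ (hmin _ (o 0).2)
    simpa [← Subtype.coe_le_coe] using o.monotone (Fin.zero_le (o.symm ⟨v, hv⟩))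
  have hne : ∀ i, i ≠ 0 → (o i : Fin (m+1)) ≠ v :=
    fun i hi h => hi (o.injective (Subtype.ext (h.trans ho0.symm)))
  let par : Fin (k+1) → Fin (k+1) := fun i =>
    if hi : i = 0 then 0 else o.symm ⟨s.1.1 (o i), hpar _ (o i).2 (hne i hi)⟩
  have hpar_spec : ∀ i, i ≠ 0 → (o (par i) : Fin (m+1)) = s.1.1 (o i) := by
    intro i hi
    simp [par, hi]
  have hpar_lt : ∀ i, i ≠ 0 → par i < i := by
    intro i hi
    have hoi : (o i : Fin (m+1)) ≠ 0 :=
      ((lt_of_le_of_ne (hmin _ (o i).2) (hne i hi).symm).trans_le' (Fin.zero_le v)).ne'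
    rw [← o.lt_iff_lt, ← Subtype.coe_lt_coe, hpar_spec i hi]
    exact s.2.2 _ hoi
  refine ⟨⟨(par, fun i => s.1.2 (o i)), by simp [par], hpar_lt⟩, fun i => o i,
    ⟨fun i i' h => o.injective (Subtype.ext h), fun i hi => (hpar_spec i hi).symm, fun _ => rfl⟩,
    ho0, fun j => ⟨fun hj => ⟨o.symm ⟨j, hj⟩, by simp⟩, fun ⟨i, hi⟩ => hi ▸ (o i).2⟩⟩

open Classical in
theorem exists_isoBelow_of_card (s : PreTree S m)
    (h : (Finset.univ.filter fun j => desc s v j).card = k + 1) :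
    ∃ T : PreTree S k, IsoBelow T s v := by
  obtain ⟨T, hT⟩ := exists_isoOn_of_card s h (by simpa using desc_refl v)
    (fun x hx => le_of_desc (by simpa using hx))
    (fun x hx hxv => by simpa using desc_parent (by simpa using hx) hxv)
  exact ⟨T, isoBelow_iff_isoOn.mpr ((isoOn_congr (by simp)).mp hT)⟩

open Classical in
theorem exists_isoAbove_of_card (s : PreTree S m) (hv : v ≠ 0)
    (h : (Finset.univ.filter fun j => ¬ desc s v j).card = k + 1) :
    ∃ T : PreTree S k, IsoAbove T s v := by
  obtain ⟨T, hT⟩ := exists_isoOn_of_card s h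
    (by simpa using fun h0 => hv (eq_zero_of_desc_zero h0))
    (fun x _ => Fin.zero_le x)
    (fun x hx _ => by
      simpa using fun hp => (by simpa using hx : ¬ desc s v x) (desc_of_desc_parent hp))
  exact ⟨T, isoAbove_iff_isoOn.mpr ((isoOn_congr (by simp)).mp hT)⟩

theorem card_filter_eq_add_of_isoOn [DecidablePred E] {l' : ℕ} {y : PreTree S l'}
    {u : Fin (m+1)} {E' : Fin (m+1) → Prop} (h₁ : IsoOn x s v (fun j => E j ∧ E' j))
    (h₂ : IsoOn y s u (fun j => E j ∧ ¬ E' j)) :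
    (Finset.univ.filter E).card = (l + 1) + (l' + 1) := by
  classical
  rw [← Finset.card_filter_add_card_filter_not (s := Finset.univ.filter E) E',
    Finset.filter_filter, Finset.filter_filter, h₁.card_filter, h₂.card_filter]

end IsoOn

section ClassSum

variable {S : Type} [Fintype S] [DecidableEq S]

open Classical in
/-- Each site lies in the sites of exactly one class, so the sum over classes counts every site
once. -/
theorem sum_tclass_mul_card_eq_sum {k : ℕ} (F : PreTree S k → Prop) {ι : Type*} [Fintype ι]
    (sites : PreTree S k → Finset ι) (g : PreTree S k → ℕ) (N : ι → ℕ)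
    (hF : ∀ i T, i ∈ sites T → F T)
    (hunique : ∀ i T T', i ∈ sites T → i ∈ sites T' → treeRel T T')
    (hinv : ∀ i T T', treeRel T T' → i ∈ sites T → i ∈ sites T')
    (hg : ∀ i T, i ∈ sites T → g T = N i)
    (hex : ∀ i, N i ≠ 0 → ∃ T, i ∈ sites T) :
    (∑ T : TClass S k, if F T.out then (g T.out * (sites T.out).card : ℤ) else 0)
      = ∑ i, (N i : ℤ) := by
  have hterm : ∀ T : TClass S k, (if F T.out then (g T.out * (sites T.out).card : ℤ) else 0)
      = ∑ i, if i ∈ sites T.out then (g T.out : ℤ) else 0 := by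
    intro T
    rw [Finset.sum_ite_mem, Finset.univ_inter, Finset.sum_const, nsmul_eq_mul, mul_comm]
    split_ifs with hT
    · rfl
    · rw [Finset.eq_empty_of_forall_notMem fun i hi => hT (hF i _ hi)]
      simp
  simp only [hterm]
  rw [Finset.sum_comm]
  refine Finset.sum_congr rfl fun i _ => ?_
  by_cases hN : N i = 0
  · rw [hN, Nat.cast_zero]
    apply Finset.sum_eq_zero
    intro T _
    split_ifs with h
    · rw [hg i _ h, hN, Nat.cast_zero]
    · rfl
  obtain ⟨T₀, hT₀⟩ := hex i hN
  have hout : i ∈ sites (Quot.mk treeRel T₀ : TClass S k).out :=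
    hinv i _ _ (treeRel_out_mk T₀) hT₀
  refine (Fintype.sum_eq_single (α := TClass S k) (Quot.mk treeRel T₀) fun T hT => ?_).trans ?_
  · refine if_neg fun h => hT ?_
    exact (Quot.out_eq T).symm.trans (Quot.sound (hunique i _ _ h hT₀))
  · rw [if_pos hout, hg i _ hout]

end ClassSum

section Cuts

variable {S : Type} {p q r m : ℕ} (a : PreTree S p) (b : PreTree S q) (c : PreTree S r)
  (s : PreTree S m)

def IsoBetween (v w : Fin (m+1)) : Prop :=
  IsoOn b s v (fun j => desc s v j ∧ ¬ desc s w j)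

def IsoOutside (v w : Fin (m+1)) : Prop :=
  IsoOn c s 0 (fun j => ¬ desc s v j ∧ ¬ desc s w j)

/-- The configurations counted by the coefficient of `s` in `(a ▷ b) ▷ c`. -/
def LeftAssocCuts (v w : Fin (m+1)) : Prop :=
  v ≠ 0 ∧ IsoAbove c s v ∧ desc s v w ∧ w ≠ v ∧ IsoBelow a s w ∧ IsoBetween b s v w

/-- The configurations counted by the coefficient of `s` in `a ▷ (b ▷ c)`. -/
def RightAssocCuts (v w : Fin (m+1)) : Prop :=
  w ≠ 0 ∧ IsoBelow a s w ∧ ¬ desc s w v ∧ v ≠ 0 ∧ IsoBetween b s v w ∧ IsoOutside c s v w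

def DisjointCuts (v w : Fin (m+1)) : Prop :=
  v ≠ 0 ∧ w ≠ 0 ∧ ¬ desc s v w ∧ ¬ desc s w v ∧ IsoBelow a s w ∧ IsoBelow b s v ∧
    IsoOutside c s v w

variable {a b c s}

theorem isoOutside_iff_isoAbove {v w : Fin (m+1)} (h : desc s v w) :
    IsoOutside c s v w ↔ IsoAbove c s v :=
  (isoOn_congr fun _ => ⟨And.left, fun hv => ⟨hv, fun hw => hv (desc_trans h hw)⟩⟩).trans
    isoAbove_iff_isoOn.symm

theorem isoBetween_iff_isoBelow {v w : Fin (m+1)} (hvw : ¬ desc s v w) (hwv : ¬ desc s w v) :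
    IsoBetween b s v w ↔ IsoBelow b s v :=
  (isoOn_congr fun _ => ⟨And.left, fun hv => ⟨hv, fun hw => (desc_total hv hw).elim hvw hwv⟩⟩).trans
    isoBelow_iff_isoOn.symm

theorem isoOutside_comm {v w : Fin (m+1)} : IsoOutside c s v w ↔ IsoOutside c s w v :=
  isoOn_congr fun _ => and_comm

theorem rightAssocCuts_iff {v w : Fin (m+1)} :
    RightAssocCuts a b c s v w ↔ LeftAssocCuts a b c s v w ∨ DisjointCuts a b c s v w := by
  constructor
  · rintro ⟨hw, ha, hwv, hv, hb, hc⟩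
    by_cases hvw : desc s v w
    · exact Or.inl ⟨hv, (isoOutside_iff_isoAbove hvw).mp hc, hvw,
        fun h => hwv (h ▸ desc_refl w), ha, hb⟩
    · exact Or.inr ⟨hv, hw, hvw, hwv, ha, (isoBetween_iff_isoBelow hvw hwv).mp hb, hc⟩
  · rintro (⟨hv, hc, hvw, hne, ha, hb⟩ | ⟨hv, hw, hvw, hwv, ha, hb, hc⟩)
    · exact ⟨le_of_desc hvw |>.trans_lt' (Fin.pos_of_ne_zero hv) |>.ne', ha,
        fun hwv => hne (desc_antisymm hwv hvw), hv, hb, (isoOutside_iff_isoAbove hvw).mpr hc⟩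
    · exact ⟨hw, ha, hwv, hv, (isoBetween_iff_isoBelow hvw hwv).mpr hb, hc⟩

theorem disjointCuts_comm {v w : Fin (m+1)} :
    DisjointCuts a b c s v w ↔ DisjointCuts b a c s w v := by
  simp only [DisjointCuts, isoOutside_comm (v := v)]
  tauto

open Classical in
theorem card_rightAssocCuts :
    (Finset.univ.filter fun vw : Fin (m+1) × Fin (m+1) => RightAssocCuts a b c s vw.1 vw.2).card
      = (Finset.univ.filter fun vw : Fin (m+1) × Fin (m+1) =>
          LeftAssocCuts a b c s vw.1 vw.2).card
        + (Finset.univ.filter fun vw : Fin (m+1) × Fin (m+1) =>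
          DisjointCuts a b c s vw.1 vw.2).card := by
  rw [← Finset.card_union_of_disjoint
    (Finset.disjoint_filter.mpr fun _ _ hL hD => hD.2.2.1 hL.2.2.1), ← Finset.filter_or]
  simp only [rightAssocCuts_iff]

open Classical in
theorem card_disjointCuts_comm :
    (Finset.univ.filter fun vw : Fin (m+1) × Fin (m+1) => DisjointCuts a b c s vw.1 vw.2).card
      = (Finset.univ.filter fun vw : Fin (m+1) × Fin (m+1) =>
          DisjointCuts b a c s vw.1 vw.2).card :=
  Finset.card_equiv (Equiv.prodComm _ _) fun _ => by simp [disjointCuts_comm]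

theorem LeftAssocCuts.exists_isoBelow {k : ℕ} {v w : Fin (m+1)} (h : LeftAssocCuts a b c s v w)
    (hk : k + 1 = (p + 1) + (q + 1)) : ∃ T : PreTree S k, IsoBelow T s v := by
  obtain ⟨-, -, hvw, -, ha, hb⟩ := h
  have ha' : IsoOn a s w (fun j => desc s v j ∧ desc s w j) :=
    (isoOn_congr fun j => ⟨fun h => ⟨desc_trans hvw h, h⟩, And.right⟩).mp
      (isoBelow_iff_isoOn.mp ha)
  exact exists_isoBelow_of_card s (hk ▸ card_filter_eq_add_of_isoOn ha' hb)

theorem RightAssocCuts.exists_isoAbove {k : ℕ} {v w : Fin (m+1)} (h : RightAssocCuts a b c s v w)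
    (hk : k + 1 = (q + 1) + (r + 1)) : ∃ T : PreTree S k, IsoAbove T s w := by
  obtain ⟨hw, -, -, -, hb, hc⟩ := h
  exact exists_isoAbove_of_card s hw (hk ▸ card_filter_eq_add_of_isoOn
    ((isoOn_congr fun _ => and_comm).mp hb) ((isoOn_congr fun _ => and_comm).mp hc))

end Cuts

section Counting

variable {S : Type} [DecidableEq S] {p q r m k : ℕ} {a : PreTree S p} {b : PreTree S q}
  {c : PreTree S r} {s : PreTree S m} {v w : Fin (m+1)}

open Classical in
theorem graftCount_eq_of_isoBelow {T : PreTree S k} (hT : IsoBelow T s v) :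
    graftCount a b T = (Finset.univ.filter fun w =>
      desc s v w ∧ w ≠ v ∧ IsoBelow a s w ∧ IsoBetween b s v w).card := by
  rw [(isoBelow_iff_isoOn.mp hT).graftCount_eq]
  refine congrArg Finset.card (Finset.filter_congr fun w _ => and_congr_right fun hvw =>
    and_congr_right fun _ => and_congr ?_ (isoOn_congr fun _ => and_comm))
  exact (isoOn_congr fun j => ⟨And.left, fun h => ⟨h, desc_trans hvw h⟩⟩).trans
    isoBelow_iff_isoOn.symm

open Classical in
theorem graftCount_eq_of_isoAbove {T : PreTree S k} (hT : IsoAbove T s w) :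
    graftCount b c T = (Finset.univ.filter fun v =>
      ¬ desc s w v ∧ v ≠ 0 ∧ IsoBetween b s v w ∧ IsoOutside c s v w).card :=
  (isoAbove_iff_isoOn.mp hT).graftCount_eq b c

end Counting

section PreLie

variable {S : Type} [Fintype S] [DecidableEq S] (F : ∀ n : ℕ, PreTree S n → Prop)
  {p q r m k : ℕ} (a : PreTree S p) (b : PreTree S q) (c : PreTree S r) {s : PreTree S m}

open Classical in
theorem sum_graftCount_leftAssoc
    (hBelow : ∀ (n : ℕ) (t : PreTree S n), F n t → ∀ (l : ℕ) (x : PreTree S l)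
      (v : Fin (n+1)), v ≠ 0 → IsoBelow x t v → F l x)
    (hk : k + 1 = (p + 1) + (q + 1)) (hs : F m s) :
    (∑ T : TClass S k, if F k T.out then
        (graftCount a b T.out * graftCount T.out c s : ℤ) else 0)
      = (Finset.univ.filter fun vw : Fin (m+1) × Fin (m+1) =>
          LeftAssocCuts a b c s vw.1 vw.2).card := by
  have hpairs : (Finset.univ.filter fun vw : Fin (m+1) × Fin (m+1) =>
      LeftAssocCuts a b c s vw.1 vw.2).card
      = ∑ v, (Finset.univ.filter fun w => LeftAssocCuts a b c s v w).card := by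
    simp only [Finset.card_filter, Fintype.sum_prod_type]
  rw [hpairs, Nat.cast_sum]
  refine sum_tclass_mul_card_eq_sum (F k)
    (fun T => Finset.univ.filter fun v => v ≠ 0 ∧ IsoBelow T s v ∧ IsoAbove c s v)
    (graftCount a b) _ ?_ ?_ ?_ ?_ ?_ <;> simp only [Finset.mem_filter, Finset.mem_univ, true_and]
  · exact fun v T ⟨hv, hT, _⟩ => hBelow m s hs k T v hv hT
  · exact fun v T T' ⟨_, hT, _⟩ ⟨_, hT', _⟩ =>
      treeRel_of_isoOn (isoBelow_iff_isoOn.mp hT) (isoBelow_iff_isoOn.mp hT')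
  · exact fun v T T' hrel ⟨hv, hT, hc⟩ =>
      ⟨hv, isoBelow_iff_isoOn.mpr ((isoBelow_iff_isoOn.mp hT).of_treeRel hrel), hc⟩
  · rintro v T ⟨hv, hT, hc⟩
    rw [graftCount_eq_of_isoBelow hT]
    simp only [LeftAssocCuts, hv, hc, ne_eq, not_false_eq_true, true_and]
  · intro v hN
    obtain ⟨w, hw⟩ := Finset.card_ne_zero.mp hN
    have hw : LeftAssocCuts a b c s v w := by simpa using hw
    obtain ⟨T, hT⟩ := hw.exists_isoBelow hk
    exact ⟨T, hw.1, hT, hw.2.1⟩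

open Classical in
theorem sum_graftCount_rightAssoc
    (hAbove : ∀ (n : ℕ) (t : PreTree S n), F n t → ∀ (l : ℕ) (x : PreTree S l)
      (v : Fin (n+1)), v ≠ 0 → IsoAbove x t v → F l x)
    (hk : k + 1 = (q + 1) + (r + 1)) (hs : F m s) :
    (∑ T : TClass S k, if F k T.out then
        (graftCount b c T.out * graftCount a T.out s : ℤ) else 0)
      = (Finset.univ.filter fun vw : Fin (m+1) × Fin (m+1) =>
          RightAssocCuts a b c s vw.1 vw.2).card := by
  have hpairs : (Finset.univ.filter fun vw : Fin (m+1) × Fin (m+1) =>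
      RightAssocCuts a b c s vw.1 vw.2).card
      = ∑ w, (Finset.univ.filter fun v => RightAssocCuts a b c s v w).card := by
    simp only [Finset.card_filter, Fintype.sum_prod_type_right]
  rw [hpairs, Nat.cast_sum]
  refine sum_tclass_mul_card_eq_sum (F k)
    (fun T => Finset.univ.filter fun w => w ≠ 0 ∧ IsoBelow a s w ∧ IsoAbove T s w)
    (graftCount b c) _ ?_ ?_ ?_ ?_ ?_ <;> simp only [Finset.mem_filter, Finset.mem_univ, true_and]
  · exact fun w T ⟨hw, _, hT⟩ => hAbove m s hs k T w hw hT
  · exact fun w T T' ⟨_, _, hT⟩ ⟨_, _, hT'⟩ =>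
      treeRel_of_isoOn (isoAbove_iff_isoOn.mp hT) (isoAbove_iff_isoOn.mp hT')
  · exact fun w T T' hrel ⟨hw, ha, hT⟩ =>
      ⟨hw, ha, isoAbove_iff_isoOn.mpr ((isoAbove_iff_isoOn.mp hT).of_treeRel hrel)⟩
  · rintro w T ⟨hw, ha, hT⟩
    rw [graftCount_eq_of_isoAbove hT]
    simp only [RightAssocCuts, hw, ha, ne_eq, not_false_eq_true, true_and]
  · intro w hN
    obtain ⟨v, hv⟩ := Finset.card_ne_zero.mp hN
    have hv : RightAssocCuts a b c s v w := by simpa using hv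
    obtain ⟨T, hT⟩ := hv.exists_isoAbove hk
    exact ⟨T, hv.1, hv.2.1, hT⟩

end PreLie

open Classical in
theorem stmt14_general (S : Type) [Fintype S] [DecidableEq S]
    (F : ∀ m : ℕ, PreTree S m → Prop)
    (hBelow : ∀ (m : ℕ) (t : PreTree S m), F m t → ∀ (p : ℕ) (a : PreTree S p)
      (v : Fin (m+1)), v ≠ 0 → IsoBelow a t v → F p a)
    (hAbove : ∀ (m : ℕ) (t : PreTree S m), F m t → ∀ (q : ℕ) (b : PreTree S q)
      (v : Fin (m+1)), v ≠ 0 → IsoAbove b t v → F q b)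
    {p q r m : ℕ} (a : PreTree S p) (b : PreTree S q) (c : PreTree S r)
    (s : PreTree S m) (hs : F m s) :
    ((∑ T : TClass S (p + q + 1), if F _ T.out then
        (graftCount a b T.out * graftCount T.out c s : ℤ) else 0)
      - ∑ T : TClass S (q + r + 1), if F _ T.out then
        (graftCount b c T.out * graftCount a T.out s : ℤ) else 0)
    =
    ((∑ T : TClass S (p + q + 1), if F _ T.out then
        (graftCount b a T.out * graftCount T.out c s : ℤ) else 0)
      - ∑ T : TClass S (p + r + 1), if F _ T.out then
        (graftCount a c T.out * graftCount b T.out s : ℤ) else 0) := by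
  rw [sum_graftCount_leftAssoc F a b c hBelow (k := p + q + 1) (by omega) hs,
    sum_graftCount_rightAssoc F a b c hAbove (k := q + r + 1) (by omega) hs,
    sum_graftCount_leftAssoc F b a c hBelow (k := p + q + 1) (by omega) hs,
    sum_graftCount_rightAssoc F b a c hAbove (k := p + r + 1) (by omega) hs,
    card_rightAssocCuts, card_rightAssocCuts, card_disjointCuts_comm]
  push_cast
  ring

open Classical in
/-- Let `F` be a collection of finite `S`-colored posets whose Hasse
diagrams are rooted trees, closed under isomorphism and under taking the convex
sub-posets `P_e(t)`, `R_e(t)` obtained by cutting an edge `e` of `t ∈ F`.  For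
connected `a, b ∈ F` put `δ_a ▷ δ_b = ∑_{t ∈ F} n(a,b,t) δ_t` with
`n(a,b,t) = graftCount a b t`.  Then the span of `{δ_t : t ∈ F}` is stable under `▷`
(by construction), and `▷` satisfies the left pre-Lie identity on it.  Stated
coefficientwise at an arbitrary `s ∈ F`: the coefficient of `δ_s` in
`(a ▷ b) ▷ c - a ▷ (b ▷ c)` is symmetric in `a` and `b`, where the inner sums run
over isomorphism classes of trees belonging to `F`. -/
theorem stmt14 (S : Type) [Fintype S] [DecidableEq S]
    (F : ∀ m : ℕ, PreTree S m → Prop)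
    (hIso : ∀ (m : ℕ) (t t' : PreTree S m), treeRel t t' → F m t → F m t')
    (hBelow : ∀ (m : ℕ) (t : PreTree S m), F m t → ∀ (p : ℕ) (a : PreTree S p)
      (v : Fin (m+1)), v ≠ 0 → IsoBelow a t v → F p a)
    (hAbove : ∀ (m : ℕ) (t : PreTree S m), F m t → ∀ (q : ℕ) (b : PreTree S q)
      (v : Fin (m+1)), v ≠ 0 → IsoAbove b t v → F q b)
    {p q r m : ℕ} (a : PreTree S p) (b : PreTree S q) (c : PreTree S r)
    (ha : F p a) (hb : F q b) (hc : F r c)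
    (s : PreTree S m) (hs : F m s) :
    ((∑ T : TClass S (p + q + 1), if F _ T.out then
        (graftCount a b T.out * graftCount T.out c s : ℤ) else 0)
      - ∑ T : TClass S (q + r + 1), if F _ T.out then
        (graftCount b c T.out * graftCount a T.out s : ℤ) else 0)
    =
    ((∑ T : TClass S (p + q + 1), if F _ T.out then
        (graftCount b a T.out * graftCount T.out c s : ℤ) else 0)
      - ∑ T : TClass S (p + r + 1), if F _ T.out then
        (graftCount a c T.out * graftCount b T.out s : ℤ) else 0) :=
  stmt14_general S F hBelow hAbove a b c s hs
end

section
/- In the pre-Lie algebra of $S$-colored rooted trees with grafting product $\rhd$, for connected trees $a, b, c$ the coefficient of a tree $s$ in $a \rhd (b \rhd c) - (a \rhd b) \rhd c$ equals the number of admissible two-edge cuts $\{e_1, e_2\}$ of $s$ (no root-to-leaf path contains both edges) such that the component containing the root of $s$ is isomorphic to $c$ and the other two components are isomorphic to $a$ and $b$ respectively. In particular this coefficient is symmetric in $a$ and $b$. -/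
open scoped BigOperators

/-- `RootIso2 c s v w` : cutting the two edges of `s` above the (incomparable)
vertices `v` and `w`, the component containing the root of `s` is isomorphic to `c`
as an `S`-colored rooted tree. -/
def RootIso2 {S : Type} {r m : ℕ} (c : PreTree S r) (s : PreTree S m)
    (v w : Fin (m+1)) : Prop :=
  ∃ g : Fin (r+1) → Fin (m+1),
    Function.Injective g ∧ g 0 = 0 ∧
    (∀ j, (¬ desc s v j ∧ ¬ desc s w j) ↔ ∃ i, g i = j) ∧
    (∀ i, i ≠ 0 → s.1.1 (g i) = g (c.1.1 i)) ∧
    (∀ i, s.1.2 (g i) = c.1.2 i)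

instance {S : Type} [DecidableEq S] {r m : ℕ} (c : PreTree S r) (s : PreTree S m)
    (v w : Fin (m+1)) : Decidable (RootIso2 c s v w) := by
  unfold RootIso2; infer_instance

/-- The number of admissible two-edge cuts of `s` — ordered pairs `(v,w)` of
incomparable non-root vertices (so no root-to-leaf path contains both cut edges) —
such that the subtree below `v` is `≅ a`, the subtree below `w` is `≅ b`, and the
component of the root is `≅ c`. -/
def cutCount {S : Type} [DecidableEq S] {p q r m : ℕ}
    (a : PreTree S p) (b : PreTree S q) (c : PreTree S r) (s : PreTree S m) : ℕ :=
  (Finset.univ.filter fun vw : Fin (m+1) × Fin (m+1) =>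
    vw.1 ≠ 0 ∧ vw.2 ≠ 0 ∧ ¬ desc s vw.1 vw.2 ∧ ¬ desc s vw.2 vw.1 ∧
    IsoBelow a s vw.1 ∧ IsoBelow b s vw.2 ∧ RootIso2 c s vw.1 vw.2).card

/-!
Both sides count pairs of edges of `s`. A term of `a ▷ (b ▷ c)` is an edge `v` of `s` cutting
off a copy of `a`, followed by an edge `w` of the remaining tree cutting it into `b` below and
`c` above; a term of `(a ▷ b) ▷ c` is an edge `w` cutting `s` into a tree `T` below and `c`
above, followed by an edge `v` of `T` cutting it into `a` below and `b` above. The sum over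
isomorphism classes of the intermediate tree collapses, because that tree is the subtree of `s`
on the relevant vertex set, so both inner counts can be read off inside `s`. The pairs of the
first kind in which `w` is an ancestor of `v` are exactly the pairs of the second kind; the
remaining ones are the admissible two-edge cuts, whose description is symmetric in `a` and `b`.
-/

open Finset

lemma Finset.sum_mul_card_filter_and {ι α : Type*} [Fintype ι] [Fintype α] (F : ι → ℕ)
    (A : α → Prop) (Q : ι → α → Prop) [DecidablePred A] [∀ i, DecidablePred (Q i)] :
    ∑ i, F i * #(univ.filter fun x => A x ∧ Q i x) =
      ∑ x, if A x then ∑ i, (if Q i x then F i else 0) else 0 := by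
  simp only [card_filter, mul_sum]
  rw [sum_comm]
  refine sum_congr rfl fun x _ => ?_
  by_cases hA : A x <;> simp [hA]

namespace PreTree

variable {S : Type} {p q r k m n : ℕ}

section Descendants

variable (t : PreTree S n)

lemma par_zero : t.1.1 0 = 0 := t.2.1

lemma par_lt {i : Fin (n+1)} (hi : i ≠ 0) : t.1.1 i < i := t.2.2 i hi

lemma iterate_par_le (l : ℕ) (i : Fin (n+1)) : t.1.1^[l] i ≤ i := by
  induction l generalizing i with
  | zero => rfl
  | succ l ih =>
    rw [Function.iterate_succ_apply]
    refine (ih _).trans ?_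
    rcases eq_or_ne i 0 with rfl | hi
    · rw [t.par_zero]
    · exact (t.par_lt hi).le

lemma iterate_par_eq_zero {l : ℕ} {i : Fin (n+1)} (hl : (i : ℕ) ≤ l) : t.1.1^[l] i = 0 := by
  induction l generalizing i with
  | zero => exact Fin.ext (Nat.le_zero.1 hl)
  | succ l ih =>
    rw [Function.iterate_succ_apply]
    rcases eq_or_ne i 0 with rfl | hi
    · rw [t.par_zero]
      exact ih (Nat.zero_le _)
    · exact ih (by have := t.par_lt hi; omega)

variable {t}

lemma desc_iff {v j : Fin (n+1)} : desc t v j ↔ ∃ l, t.1.1^[l] j = v := by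
  refine ⟨fun ⟨l, _, hl⟩ => ⟨l, hl⟩, fun ⟨l, hl⟩ => ?_⟩
  by_cases hln : l < n + 2
  · exact ⟨l, mem_range.2 hln, hl⟩
  · -- past `n + 1` steps every vertex has reached the root
    refine ⟨n + 1, mem_range.2 (by omega), ?_⟩
    rw [t.iterate_par_eq_zero (by omega), ← hl, t.iterate_par_eq_zero (by omega)]

lemma desc_refl (v : Fin (n+1)) : desc t v v := desc_iff.2 ⟨0, rfl⟩

lemma desc_zero_left (j : Fin (n+1)) : desc t 0 j :=
  desc_iff.2 ⟨n, t.iterate_par_eq_zero (by omega)⟩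

lemma desc_zero_right {v : Fin (n+1)} : desc t v 0 ↔ v = 0 := by
  refine ⟨fun h => ?_, by rintro rfl; exact desc_refl 0⟩
  obtain ⟨l, hl⟩ := desc_iff.1 h
  rw [Function.iterate_fixed t.par_zero] at hl
  exact hl.symm

lemma desc_le {v j : Fin (n+1)} (h : desc t v j) : v ≤ j := by
  obtain ⟨l, rfl⟩ := desc_iff.1 h
  exact t.iterate_par_le l j

lemma desc_antisymm {v j : Fin (n+1)} (h₁ : desc t v j) (h₂ : desc t j v) : v = j :=
  (desc_le h₁).antisymm (desc_le h₂)

lemma desc_trans {u v j : Fin (n+1)} (h₁ : desc t u v) (h₂ : desc t v j) : desc t u j := by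
  obtain ⟨l₁, hl₁⟩ := desc_iff.1 h₁
  obtain ⟨l₂, hl₂⟩ := desc_iff.1 h₂
  exact desc_iff.2 ⟨l₁ + l₂, by rw [Function.iterate_add_apply, hl₂, hl₁]⟩

lemma desc_total_of_desc {v w j : Fin (n+1)} (hv : desc t v j) (hw : desc t w j) :
    desc t v w ∨ desc t w v := by
  obtain ⟨l₁, hl₁⟩ := desc_iff.1 hv
  obtain ⟨l₂, hl₂⟩ := desc_iff.1 hw
  rcases le_total l₁ l₂ with h | h
  · refine .inr (desc_iff.2 ⟨l₂ - l₁, ?_⟩)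
    rw [← hl₁, ← Function.iterate_add_apply, Nat.sub_add_cancel h, hl₂]
  · refine .inl (desc_iff.2 ⟨l₁ - l₂, ?_⟩)
    rw [← hl₂, ← Function.iterate_add_apply, Nat.sub_add_cancel h, hl₁]

lemma desc_of_desc_par {v j : Fin (n+1)} (h : desc t v (t.1.1 j)) : desc t v j := by
  obtain ⟨l, hl⟩ := desc_iff.1 h
  exact desc_iff.2 ⟨l + 1, hl⟩

lemma desc_par_of_desc {v j : Fin (n+1)} (h : desc t v j) (hj : j ≠ v) :
    desc t v (t.1.1 j) := by
  obtain ⟨_ | l, hl⟩ := desc_iff.1 h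
  · exact absurd hl hj
  · exact desc_iff.2 ⟨l, hl⟩

end Descendants

/-- The common shape of `IsoBelow`, `IsoAbove` and `RootIso2`: `G` identifies `b` with the
subtree of `s` on the vertices satisfying `P`, rooted at `ρ`. -/
structure IsCopy (b : PreTree S k) (s : PreTree S m) (ρ : Fin (m+1)) (P : Fin (m+1) → Prop)
    (G : Fin (k+1) → Fin (m+1)) : Prop where
  injective : Function.Injective G
  map_zero : G 0 = ρ
  mem_iff : ∀ j, P j ↔ ∃ i, G i = j
  map_par : ∀ i, i ≠ 0 → s.1.1 (G i) = G (b.1.1 i)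
  map_col : ∀ i, s.1.2 (G i) = b.1.2 i

def IsoOn (b : PreTree S k) (s : PreTree S m) (ρ : Fin (m+1)) (P : Fin (m+1) → Prop) : Prop :=
  ∃ G, IsCopy b s ρ P G

section Copies

variable {b : PreTree S k} {s : PreTree S m} {ρ : Fin (m+1)} {P : Fin (m+1) → Prop}

lemma isoBelow_iff_isoOn {v : Fin (m+1)} : IsoBelow b s v ↔ IsoOn b s v (desc s v) :=
  ⟨fun ⟨G, h₁, h₂, h₃, h₄, h₅⟩ => ⟨G, h₁, h₂, h₃, h₄, h₅⟩,
    fun ⟨G, h⟩ => ⟨G, h.1, h.2, h.3, h.4, h.5⟩⟩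

lemma isoAbove_iff_isoOn {v : Fin (m+1)} :
    IsoAbove b s v ↔ IsoOn b s 0 (fun j => ¬ desc s v j) :=
  ⟨fun ⟨G, h₁, h₂, h₃, h₄, h₅⟩ => ⟨G, h₁, h₂, h₃, h₄, h₅⟩,
    fun ⟨G, h⟩ => ⟨G, h.1, h.2, h.3, h.4, h.5⟩⟩

lemma rootIso2_iff_isoOn {v w : Fin (m+1)} :
    RootIso2 b s v w ↔ IsoOn b s 0 (fun j => ¬ desc s v j ∧ ¬ desc s w j) :=
  ⟨fun ⟨G, h₁, h₂, h₃, h₄, h₅⟩ => ⟨G, h₁, h₂, h₃, h₄, h₅⟩,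
    fun ⟨G, h⟩ => ⟨G, h.1, h.2, h.3, h.4, h.5⟩⟩

lemma isoOn_congr {P' : Fin (m+1) → Prop} (h : ∀ j, P j ↔ P' j) :
    IsoOn b s ρ P ↔ IsoOn b s ρ P' := by
  rw [funext fun j => propext (h j)]

namespace IsCopy

variable {G : Fin (k+1) → Fin (m+1)}

lemma mem (hG : IsCopy b s ρ P G) (i : Fin (k+1)) : P (G i) := (hG.mem_iff _).2 ⟨i, rfl⟩

lemma card_filter (hG : IsCopy b s ρ P G) [DecidablePred P] : #(univ.filter P) = k + 1 := by
  have : univ.filter P = univ.image G := by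
    ext j
    simp [hG.mem_iff]
  rw [this, card_image_of_injective _ hG.injective, card_univ, Fintype.card_fin]

lemma desc_root (hG : IsCopy b s ρ P G) (i : Fin (k+1)) : desc s ρ (G i) := by
  induction i using WellFoundedLT.induction with
  | ind i ih =>
    rcases eq_or_ne i 0 with rfl | hi
    · rw [hG.map_zero]
      exact desc_refl ρ
    · apply desc_of_desc_par
      rw [hG.map_par i hi]
      exact ih _ (b.par_lt hi)

lemma desc_iff (hG : IsCopy b s ρ P G) (v j : Fin (k+1)) : desc b v j ↔ desc s (G v) (G j) := by
  constructor
  · intro h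
    obtain ⟨l, hl⟩ := PreTree.desc_iff.1 h
    induction l generalizing j with
    | zero => exact hl ▸ desc_refl _
    | succ l ih =>
      have h' := ih (b.1.1 j) (PreTree.desc_iff.2 ⟨l, hl⟩) hl
      rcases eq_or_ne j 0 with rfl | hj
      · rwa [b.par_zero] at h'
      · exact desc_of_desc_par (hG.map_par j hj ▸ h')
  · intro h
    induction j using WellFoundedLT.induction with
    | ind j ih =>
      by_cases hjv : j = v
      · rw [hjv]
        exact desc_refl v
      have hpar := desc_par_of_desc h (hG.injective.ne hjv)
      rcases eq_or_ne j 0 with rfl | hj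
      · -- the copy's root `ρ` lies below `G v`, so `G v = ρ`
        rw [hG.map_zero] at h
        exact absurd (hG.injective ((desc_antisymm h (hG.desc_root v)).trans hG.map_zero.symm))
          (Ne.symm hjv)
      · rw [hG.map_par j hj] at hpar
        exact desc_of_desc_par (ih _ (b.par_lt hj) hpar)

end IsCopy

end Copies

namespace IsCopy

variable {t : PreTree S n} {s : PreTree S m} {ρ : Fin (m+1)} {P : Fin (m+1) → Prop}
  {G : Fin (n+1) → Fin (m+1)}
  {b : PreTree S k} {w : Fin (n+1)} {Q : Fin (n+1) → Prop} {P' : Fin (m+1) → Prop}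

/-- `hQ` keeps the non-root vertices of the copy of `b` away from the root of `t`, the one vertex
where the parent maps of `t` and `s` may disagree. -/
lemma isoOn_iff (hG : IsCopy t s ρ P G) (hQ : Q 0 → w = 0) (hP' : ∀ j, P' j → P j)
    (hP'Q : ∀ i, P' (G i) ↔ Q i) :
    IsoOn b s (G w) P' ↔ IsoOn b t w Q := by
  have ne_zero {F : Fin (k+1) → Fin (n+1)} (hinj : Function.Injective F) (h0 : F 0 = w)
      (hQF : ∀ i, Q (F i)) {i} (hi : i ≠ 0) : F i ≠ 0 :=
    fun h => hi (hinj (h.trans ((hQ (h ▸ hQF i)).symm.trans h0.symm)))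
  constructor
  · rintro ⟨H, hH⟩
    choose F hF using fun i => (hG.mem_iff _).1 (hP' _ (hH.mem i))
    have hinj : Function.Injective F := fun x y h => hH.injective (by rw [← hF, ← hF, h])
    have h0 : F 0 = w := hG.injective (by rw [hF, hH.map_zero])
    have hQF (i) : Q (F i) := (hP'Q _).1 (hF i ▸ hH.mem i)
    refine ⟨F, hinj, h0, fun j => ?_, fun i hi => hG.injective ?_, fun i => ?_⟩
    · simp only [← hP'Q, hH.mem_iff, ← hF, hG.injective.eq_iff]
    · rw [← hG.map_par _ (ne_zero hinj h0 hQF hi), hF, hF, hH.map_par i hi]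
    · rw [← hG.map_col, hF, hH.map_col]
  · rintro ⟨F, hF⟩
    refine ⟨G ∘ F, hG.injective.comp hF.injective, congrArg G hF.map_zero, fun j => ?_,
      fun i hi => ?_, fun i => ?_⟩
    · constructor
      · intro hj
        obtain ⟨j, rfl⟩ := (hG.mem_iff _).1 (hP' _ hj)
        obtain ⟨i, rfl⟩ := (hF.mem_iff _).1 ((hP'Q _).1 hj)
        exact ⟨i, rfl⟩
      · rintro ⟨i, rfl⟩
        exact (hP'Q _).2 (hF.mem i)
    · simp only [Function.comp_apply]
      rw [hG.map_par _ (ne_zero hF.injective hF.map_zero hF.mem hi), hF.map_par i hi]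
    · simp only [Function.comp_apply]
      rw [hG.map_col, hF.map_col]

end IsCopy

lemma isCopy_id (t : PreTree S n) : IsCopy t t 0 (fun _ => True) id :=
  ⟨Function.injective_id, rfl, fun j => iff_of_true trivial ⟨j, rfl⟩, fun _ _ => rfl,
    fun _ => rfl⟩

lemma treeRel_iff_isoOn {t t' : PreTree S n} : treeRel t t' ↔ IsoOn t t' 0 (fun _ => True) := by
  constructor
  · rintro ⟨e, he₀, hpar, hcol⟩
    exact ⟨e, e.injective, he₀, fun j => iff_of_true trivial (e.surjective j), hpar, hcol⟩
  · rintro ⟨G, hG⟩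
    exact ⟨Equiv.ofBijective G (Finite.injective_iff_bijective.1 hG.injective), hG.map_zero,
      hG.map_par, hG.map_col⟩

lemma IsCopy.isoOn_univ_iff {t t' : PreTree S n} {e : Fin (n+1) → Fin (n+1)}
    (he : IsCopy t' t 0 (fun _ => True) e) (b : PreTree S n) :
    IsoOn b t 0 (fun _ => True) ↔ IsoOn b t' 0 (fun _ => True) := by
  have := he.isoOn_iff (b := b) (Q := fun _ => True) (P' := fun _ => True) (fun _ => rfl)
    (fun _ _ => trivial) (fun _ => Iff.rfl)
  rwa [he.map_zero] at this

lemma treeRel_equivalence : Equivalence (@treeRel S n) where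
  refl t := treeRel_iff_isoOn.2 ⟨id, isCopy_id t⟩
  symm {t t'} h := by
    obtain ⟨e, he⟩ := treeRel_iff_isoOn.1 h
    exact treeRel_iff_isoOn.2 ((he.isoOn_univ_iff t').1 ⟨id, isCopy_id t'⟩)
  trans {t t' t''} h h' := by
    obtain ⟨e, he⟩ := treeRel_iff_isoOn.1 h'
    exact treeRel_iff_isoOn.2 ((he.isoOn_univ_iff t).2 (treeRel_iff_isoOn.1 h))

lemma TClass.eq_mk_iff [Fintype S] [DecidableEq S] (T : TClass S n) (t : PreTree S n) :
    T = Quot.mk _ t ↔ treeRel T.out t := by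
  constructor
  · rintro rfl
    exact treeRel_equivalence.eqvGen_iff.1 (Quot.eqvGen_exact (Quot.out_eq _))
  · intro h
    rw [← Quot.out_eq T]
    exact Quot.sound h

/-- Enumerating the vertices increasingly keeps every parent before its children. -/
lemma exists_isoOn (s : PreTree S m) {ρ : Fin (m+1)} {P : Fin (m+1) → Prop} [DecidablePred P]
    (hcard : #(univ.filter P) = n + 1) (hρ : P ρ) (hdesc : ∀ j, P j → desc s ρ j)
    (hpar : ∀ j, P j → j ≠ ρ → P (s.1.1 j)) : ∃ t : PreTree S n, IsoOn t s ρ P := by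
  set e := (univ.filter P).orderIsoOfFin hcard
  have hmem (i) : P (e i) := (mem_filter.1 (e i).2).2
  have he₀ : (e 0 : Fin (m+1)) = ρ := by
    refine le_antisymm ?_ (desc_le (hdesc _ (hmem 0)))
    have := e.monotone (Fin.zero_le (e.symm ⟨ρ, mem_filter.2 ⟨mem_univ _, hρ⟩⟩))
    rwa [OrderIso.apply_symm_apply] at this
  have hne (i) (hi : i ≠ 0) : (e i : Fin (m+1)) ≠ ρ :=
    fun h => hi (e.injective (Subtype.ext (h.trans he₀.symm)))
  let par (i : Fin (n+1)) : Fin (n+1) :=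
    if hi : i = 0 then 0
    else e.symm ⟨s.1.1 (e i), mem_filter.2 ⟨mem_univ _, hpar _ (hmem i) (hne i hi)⟩⟩
  have hpar_e (i) (hi : i ≠ 0) : (e (par i) : Fin (m+1)) = s.1.1 (e i) := by
    simp [par, hi]
  have hpar_lt (i) (hi : i ≠ 0) : par i < i := by
    rw [← e.lt_iff_lt, ← Subtype.coe_lt_coe, hpar_e i hi]
    refine s.par_lt fun h => hne i hi ?_
    exact h.trans (Fin.le_zero_iff.1 (h ▸ desc_le (hdesc _ (hmem i)))).symm
  refine ⟨⟨(par, fun i => s.1.2 (e i)), show par 0 = 0 from dif_pos rfl, hpar_lt⟩,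
    fun i => e i,
    fun x y h => e.injective (Subtype.ext h), he₀, fun j => ⟨fun hj => ?_, ?_⟩,
    fun i hi => (hpar_e i hi).symm, fun _ => rfl⟩
  · exact ⟨e.symm ⟨j, mem_filter.2 ⟨mem_univ _, hj⟩⟩, by simp⟩
  · rintro ⟨i, rfl⟩
    exact hmem i

/-- The edge above `w` of the subtree of `s` on the vertices satisfying `P` (rooted at `ρ`)
cuts it into a copy of `b` below and a copy of `c` above. -/
def IsCutOn (b : PreTree S p) (c : PreTree S q) (s : PreTree S m) (ρ : Fin (m+1))
    (P : Fin (m+1) → Prop) (w : Fin (m+1)) : Prop :=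
  P w ∧ w ≠ ρ ∧ IsoOn b s w (fun j => P j ∧ desc s w j) ∧
    IsoOn c s ρ (fun j => P j ∧ ¬ desc s w j)

section Cuts

variable {s : PreTree S m} {ρ : Fin (m+1)} {P : Fin (m+1) → Prop}

lemma IsCutOn.card_filter {b : PreTree S p} {c : PreTree S q} [DecidablePred P]
    {w : Fin (m+1)} (h : IsCutOn b c s ρ P w) : #(univ.filter P) = p + q + 2 := by
  obtain ⟨-, -, ⟨_, hb⟩, ⟨_, hc⟩⟩ := h
  have := card_filter_add_card_filter_not (s := univ.filter P) (p := desc s w)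
  rw [filter_filter, filter_filter, hb.card_filter, hc.card_filter] at this
  omega

open Classical in
lemma IsCopy.graftCount_eq [DecidableEq S] {t : PreTree S n} {G : Fin (n+1) → Fin (m+1)}
    (hG : IsCopy t s ρ P G) (b : PreTree S p) (c : PreTree S q) :
    graftCount b c t = #(univ.filter (IsCutOn b c s ρ P)) := by
  have hcut (w) : (w ≠ 0 ∧ IsoBelow b t w ∧ IsoAbove c t w) ↔ IsCutOn b c s ρ P (G w) := by
    have hb := hG.isoOn_iff (b := b) (w := w) (P' := fun j => P j ∧ desc s (G w) j)
      desc_zero_right.1 (fun _ h => h.1) fun i => by rw [← hG.desc_iff, and_iff_right (hG.mem i)]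
    have hc := hG.isoOn_iff (b := c) (w := 0) (P' := fun j => P j ∧ ¬ desc s (G w) j)
      (fun _ => rfl) (fun _ h => h.1) fun i => by rw [← hG.desc_iff, and_iff_right (hG.mem i)]
    rw [hG.map_zero] at hc
    rw [IsCutOn, isoBelow_iff_isoOn, isoAbove_iff_isoOn, hb, hc, hG.injective.ne_iff' hG.map_zero,
      and_iff_right (hG.mem w)]
  unfold graftCount
  refine card_nbij G (fun w hw => ?_) hG.injective.injOn fun v hv => ?_
  · simpa [hcut] using hw
  · simp only [coe_filter, mem_univ, true_and, Set.mem_ofPred_eq] at hv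
    obtain ⟨w, rfl⟩ := (hG.mem_iff v).1 hv.1
    exact ⟨w, by simpa [hcut] using hv, rfl⟩

end Cuts

section Classes

variable [Fintype S] [DecidableEq S]

open Classical in
/-- Only the class of the subtree of `s` on `P` contributes, and its cuts are counted inside `s`. -/
lemma sum_ite_isoOn_graftCount (b : PreTree S p) (c : PreTree S q) (s : PreTree S m)
    {ρ : Fin (m+1)} {P : Fin (m+1) → Prop} (hρ : P ρ) (hdesc : ∀ j, P j → desc s ρ j)
    (hpar : ∀ j, P j → j ≠ ρ → P (s.1.1 j)) :
    ∑ T : TClass S (p + q + 1), (if IsoOn T.out s ρ P then graftCount b c T.out else 0) =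
      #(univ.filter (IsCutOn b c s ρ P)) := by
  by_cases hcard : #(univ.filter P) = p + q + 1 + 1
  · obtain ⟨t, G, hG⟩ := exists_isoOn s hcard hρ hdesc hpar
    set T₀ : TClass S (p + q + 1) := Quot.mk _ t
    have hT (T : TClass S (p + q + 1)) : IsoOn T.out s ρ P ↔ T = T₀ := by
      have := hG.isoOn_iff (b := T.out) (w := 0) (Q := fun _ => True) (fun _ => rfl)
        (fun _ h => h) fun i => iff_of_true (hG.mem i) trivial
      rw [hG.map_zero] at this
      rw [TClass.eq_mk_iff, treeRel_iff_isoOn, this]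
    simp only [hT]
    rw [Fintype.sum_ite_eq']
    obtain ⟨G', hG'⟩ := (hT _).2 rfl
    exact hG'.graftCount_eq b c
  · rw [sum_eq_zero fun T _ => if_neg fun ⟨_, hG⟩ => hcard hG.card_filter, eq_comm,
      card_eq_zero, filter_eq_empty_iff]
    exact fun w _ hw => hcard hw.card_filter

variable (a : PreTree S p) (b : PreTree S q) (c : PreTree S r) (s : PreTree S m)

open Classical in
lemma sum_graftCount_nested_right :
    ∑ T : TClass S (q + r + 1), graftCount b c T.out * graftCount a T.out s =
      ∑ v, if v ≠ 0 ∧ IsoBelow a s v then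
        #(univ.filter (IsCutOn b c s 0 fun j => ¬ desc s v j)) else 0 := by
  have h (T : TClass S (q + r + 1)) : graftCount a T.out s =
      #(univ.filter fun v =>
        (v ≠ 0 ∧ IsoBelow a s v) ∧ IsoOn T.out s 0 fun j => ¬ desc s v j) := by
    unfold graftCount
    congr 1
    ext v
    simp only [mem_filter, isoAbove_iff_isoOn, and_assoc]
  simp only [h, sum_mul_card_filter_and]
  refine sum_congr rfl fun v _ => ?_
  split_ifs with hv
  · exact sum_ite_isoOn_graftCount b c s (fun h => hv.1 (desc_zero_right.1 h))
      (fun j _ => desc_zero_left j) fun j hj _ h => hj (desc_of_desc_par h)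
  · rfl

open Classical in
lemma sum_graftCount_nested_left :
    ∑ T : TClass S (p + q + 1), graftCount a b T.out * graftCount T.out c s =
      ∑ w, if w ≠ 0 ∧ IsoAbove c s w then
        #(univ.filter (IsCutOn a b s w (desc s w))) else 0 := by
  have h (T : TClass S (p + q + 1)) : graftCount T.out c s =
      #(univ.filter fun w => (w ≠ 0 ∧ IsoAbove c s w) ∧ IsoOn T.out s w (desc s w)) := by
    unfold graftCount
    congr 1
    ext w
    simp only [mem_filter, isoBelow_iff_isoOn]
    tauto
  simp only [h, sum_mul_card_filter_and]
  refine sum_congr rfl fun w _ => ?_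
  split_ifs
  · exact sum_ite_isoOn_graftCount a b s (desc_refl w) (fun _ h => h)
      fun _ hj hne => desc_par_of_desc hj hne
  · rfl

end Classes

section TwoCuts

variable {a : PreTree S p} {b : PreTree S q} {c : PreTree S r} {s : PreTree S m}
  {v w : Fin (m+1)}

lemma isCutOn_compl_iff_of_desc (h : desc s w v) :
    (v ≠ 0 ∧ IsoBelow a s v) ∧ IsCutOn b c s 0 (fun j => ¬ desc s v j) w ↔
      (w ≠ 0 ∧ IsoAbove c s w) ∧ IsCutOn a b s w (desc s w) v := by
  have hroot : ∀ j, (¬ desc s v j ∧ ¬ desc s w j) ↔ ¬ desc s w j :=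
    fun j => ⟨And.right, fun hj => ⟨fun hv => hj (desc_trans h hv), hj⟩⟩
  have hbelow : ∀ j, (desc s w j ∧ desc s v j) ↔ desc s v j :=
    fun j => ⟨And.right, fun hj => ⟨desc_trans h hj, hj⟩⟩
  have hmid : ∀ j, (¬ desc s v j ∧ desc s w j) ↔ (desc s w j ∧ ¬ desc s v j) :=
    fun _ => and_comm
  have hvw : ¬ desc s v w ↔ v ≠ w :=
    ⟨fun hn he => hn (he ▸ desc_refl v), fun hne hd => hne (desc_antisymm hd h)⟩
  have hv : w ≠ 0 → v ≠ 0 := fun hw hv => hw (desc_zero_right.1 (hv ▸ h))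
  simp only [IsCutOn, isoBelow_iff_isoOn, isoAbove_iff_isoOn, isoOn_congr hroot,
    isoOn_congr hbelow, isoOn_congr hmid, hvw]
  tauto

lemma isCutOn_compl_iff_of_not_desc (h : ¬ desc s w v) :
    (v ≠ 0 ∧ IsoBelow a s v) ∧ IsCutOn b c s 0 (fun j => ¬ desc s v j) w ↔
      v ≠ 0 ∧ w ≠ 0 ∧ ¬ desc s v w ∧ ¬ desc s w v ∧
        IsoBelow a s v ∧ IsoBelow b s w ∧ RootIso2 c s v w := by
  have hmid (hvw : ¬ desc s v w) (j) : (¬ desc s v j ∧ desc s w j) ↔ desc s w j :=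
    ⟨And.right, fun hj => ⟨fun hv => (desc_total_of_desc hv hj).elim hvw h, hj⟩⟩
  constructor
  · rintro ⟨⟨hv, ha⟩, hvw, hw, hb, hc⟩
    exact ⟨hv, hw, hvw, h, ha, isoBelow_iff_isoOn.2 ((isoOn_congr (hmid hvw)).1 hb),
      rootIso2_iff_isoOn.2 hc⟩
  · rintro ⟨hv, hw, hvw, -, ha, hb, hc⟩
    exact ⟨⟨hv, ha⟩, hvw, hw, (isoOn_congr (hmid hvw)).2 (isoBelow_iff_isoOn.1 hb),
      rootIso2_iff_isoOn.1 hc⟩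

lemma rootIso2_comm : RootIso2 c s v w ↔ RootIso2 c s w v := by
  rw [rootIso2_iff_isoOn, rootIso2_iff_isoOn, isoOn_congr fun _ => and_comm]

end TwoCuts

section TwoCutCounts

variable [DecidableEq S] (a : PreTree S p) (b : PreTree S q) (c : PreTree S r) (s : PreTree S m)

lemma cutCount_comm : cutCount a b c s = cutCount b a c s :=
  card_equiv (Equiv.prodComm _ _) fun vw => by
    simp only [mem_filter, mem_univ, true_and, Equiv.prodComm_apply, Prod.fst_swap,
      Prod.snd_swap, rootIso2_comm (v := vw.1)]
    tauto

open Classical in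
lemma sum_isCutOn_compl_eq :
    (∑ v, if v ≠ 0 ∧ IsoBelow a s v then
        #(univ.filter (IsCutOn b c s 0 fun j => ¬ desc s v j)) else 0) =
      (∑ w, if w ≠ 0 ∧ IsoAbove c s w then
        #(univ.filter (IsCutOn a b s w (desc s w))) else 0) +
        cutCount a b c s := by
  have ite_card {α : Type} [Fintype α] (A : Prop) [Decidable A] (Q : α → Prop)
      [DecidablePred Q] :
      (if A then #(univ.filter Q) else 0) = ∑ x, if A ∧ Q x then 1 else 0 := by
    by_cases hA : A
    · simp only [hA, if_true, true_and, card_filter]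
    · simp only [hA, if_false, false_and, sum_const_zero]
  simp only [ite_card]
  simp only [cutCount, card_filter, Fintype.sum_prod_type]
  conv_rhs => enter [1]; rw [sum_comm]
  rw [← sum_add_distrib]
  refine sum_congr rfl fun v _ => ?_
  rw [← sum_add_distrib]
  refine sum_congr rfl fun w _ => ?_
  by_cases h : desc s w v
  · simp only [isCutOn_compl_iff_of_desc h, h, not_true, false_and, and_false, if_false,
      add_zero]
  · rw [if_neg fun hB : _ ∧ IsCutOn a b s w (desc s w) v => h hB.2.1, zero_add]
    exact if_congr (isCutOn_compl_iff_of_not_desc h) rfl rfl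

end TwoCutCounts

end PreTree

open PreTree in
/-- In the pre-Lie algebra of `S`-colored rooted trees with the grafting
product `▷`, for trees `a, b, c` the coefficient of a tree `s` in
`a ▷ (b ▷ c) - (a ▷ b) ▷ c` equals the number of admissible two-edge cuts of `s`
whose root component is `≅ c` and whose two remaining components are `≅ a` and `≅ b`
respectively.  In particular this coefficient is symmetric in `a` and `b`. -/
theorem stmt15 (S : Type) [Fintype S] [DecidableEq S] {p q r m : ℕ}
    (a : PreTree S p) (b : PreTree S q) (c : PreTree S r) (s : PreTree S m) :
    ((∑ T : TClass S (q + r + 1), (graftCount b c T.out * graftCount a T.out s : ℤ))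
      - ∑ T : TClass S (p + q + 1), (graftCount a b T.out * graftCount T.out c s : ℤ))
      = (cutCount a b c s : ℤ) ∧
    cutCount a b c s = cutCount b a c s := by
  refine ⟨?_, cutCount_comm a b c s⟩
  have h := sum_isCutOn_compl_eq a b c s
  rw [← sum_graftCount_nested_right, ← sum_graftCount_nested_left] at h
  rw [sub_eq_iff_eq_add']
  exact_mod_cast h
end
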